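/- arXiv:2102.00766 — 2 statements merged into one kernel-verified Lean document; each statement's English description precedes it below -/
import Mathlib

section
/- Let R be a ring and M_1, ..., M_n R-modules of finite length such that for all i ≠ j, the modules M_i and M_j have no isomorphic simple composition factor in common. If N is a submodule of M_1 ⊕ ... ⊕ M_n such that every projection N → M_i is surjective, then N = M_1 ⊕ ... ⊕ M_n. -/
/-!
Let `K ⊆ Mᵢ` be the set of `m` with `single i m ∈ N`. An element of `N` that vanishes off the
`i`-th coordinate lies in `single i K`, so the surjection `N → Mᵢ ⧸ K` factors through the image
of `N` in `Π j ≠ i, Mⱼ`. If `K ≠ Mᵢ`, a simple subquotient of `Mᵢ ⧸ K` (which exists by finite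
length) is then a subquotient of `Π j ≠ i, Mⱼ`, hence of some `Mⱼ` with `j ≠ i`, contradicting
the hypothesis. So `N` contains every summand `single i Mᵢ`, and therefore everything.
-/

/-- `S` is a composition factor of `M`: it is isomorphic to a quotient of a
submodule of `M` (for `S` simple and `M` of finite length this is equivalent to
appearing in a composition series of `M`). -/
def IsCompFactor (A : Type*) [Ring A] (M : Type*) [AddCommGroup M] [Module A M]
    (S : Type*) [AddCommGroup S] [Module A S] : Prop :=
  ∃ (q : Submodule A M) (p : Submodule A q), Nonempty ((q ⧸ p) ≃ₗ[A] S)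

universe u v

section

variable {A : Type*} [Ring A] {X Y Z S : Type*} [AddCommGroup X] [Module A X]
  [AddCommGroup Y] [Module A Y] [AddCommGroup Z] [Module A Z] [AddCommGroup S] [Module A S]

namespace IsCompFactor

theorem of_linearEquiv (e : X ≃ₗ[A] S) : IsCompFactor A X S :=
  ⟨⊤, ⊥, ⟨(Submodule.quotEquivOfEqBot ⊥ rfl).trans (Submodule.topEquiv.trans e)⟩⟩

theorem of_injective (f : X →ₗ[A] Y) (hf : Function.Injective f) (h : IsCompFactor A X S) :
    IsCompFactor A Y S := by
  obtain ⟨q, p, ⟨e⟩⟩ := h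
  let f' := Submodule.equivMapOfInjective f hf q
  exact ⟨q.map f, p.map f'.toLinearMap,
    ⟨(Submodule.Quotient.equiv p _ f' rfl).symm.trans e⟩⟩

theorem of_surjective (f : X →ₗ[A] Y) (hf : Function.Surjective f) (h : IsCompFactor A Y S) :
    IsCompFactor A X S := by
  obtain ⟨q, p, ⟨e⟩⟩ := h
  let φ := p.mkQ ∘ₗ f.submoduleComap q
  have hφ : Function.Surjective φ :=
    p.mkQ_surjective.comp (f.submoduleComap_surjective_of_surjective q hf)
  exact ⟨q.comap f, LinearMap.ker φ, ⟨(φ.quotKerEquivOfSurjective hφ).trans e⟩⟩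

theorem of_ker_le (f : Z →ₗ[A] X) (hf : Function.Surjective f) (g : Z →ₗ[A] Y)
    (hker : LinearMap.ker g ≤ LinearMap.ker f) (h : IsCompFactor A X S) : IsCompFactor A Y S :=
  (h.of_surjective ((LinearMap.ker g).liftQ f hker) (hf.of_comp (g := (LinearMap.ker g).mkQ))
    |>.of_injective _ g.quotKerEquivRange.injective).of_injective _ (Submodule.injective_subtype _)

theorem not_of_subsingleton [Subsingleton X] [Nontrivial S] : ¬IsCompFactor A X S := by
  rintro ⟨q, p, ⟨e⟩⟩
  exact not_subsingleton S e.symm.toEquiv.subsingleton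

theorem submodule_or_quotient (hS : IsSimpleModule A S) (P : Submodule A X)
    (h : IsCompFactor A X S) : IsCompFactor A P S ∨ IsCompFactor A (X ⧸ P) S := by
  obtain ⟨q, p, ⟨e⟩⟩ := h
  have hp : IsCoatom p := isSimpleModule_iff_isCoatom.mp (IsSimpleModule.congr e)
  let P' := P.comap q.subtype
  by_cases hP' : P' ≤ p
  · right
    refine (of_linearEquiv e).of_ker_le p.mkQ p.mkQ_surjective (P.mkQ ∘ₗ q.subtype) ?_
    simpa [LinearMap.ker_comp] using hP'
  · left
    have hsurj : Function.Surjective (p.mkQ ∘ₗ P'.subtype) := by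
      rw [← LinearMap.range_eq_top, LinearMap.range_comp, Submodule.range_subtype,
        Submodule.map_mkQ_eq_top]
      exact hp.2 _ (left_lt_sup.mpr hP')
    refine ((of_linearEquiv e).of_surjective _ hsurj).of_injective
      (q.subtype.restrict fun _ hx => hx) ?_
    simp [disjoint_bot_right]

theorem prod (hS : IsSimpleModule A S) (h : IsCompFactor A (X × Y) S) :
    IsCompFactor A X S ∨ IsCompFactor A Y S := by
  refine (h.submodule_or_quotient hS (LinearMap.ker (LinearMap.fst A X Y))).symm.imp ?_ ?_
  · exact fun h' => h'.of_injective _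
      (LinearMap.quotKerEquivOfSurjective _ LinearMap.fst_surjective).injective
  · refine fun h' => h'.of_injective (LinearMap.snd A X Y ∘ₗ Submodule.subtype _) ?_
    rintro ⟨⟨x, y⟩, hx : x = 0⟩ ⟨⟨x', y'⟩, hx' : x' = 0⟩ (hy : y = y')
    subst_vars
    rfl

theorem exists_of_pi {ι : Type v} [Finite ι] {M : ι → Type u} [∀ i, AddCommGroup (M i)]
    [∀ i, Module A (M i)] (hS : IsSimpleModule A S) (h : IsCompFactor A (Π i, M i) S) :
    ∃ i, IsCompFactor A (M i) S := by
  have := IsSimpleModule.nontrivial A S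
  by_contra! hM
  exact Module.pi_induction' A (fun N _ _ => ¬IsCompFactor A N S)
    (fun N _ _ => ¬IsCompFactor A N S) (fun e hN h' => hN (h'.of_injective _ e.symm.injective))
    (fun e hN h' => hN (h'.of_injective _ e.symm.injective)) not_of_subsingleton
    (fun hN hN' h' => (h'.prod hS).elim hN hN') M hM h

end IsCompFactor

theorem exists_isSimpleModule_isCompFactor (X : Type v) [AddCommGroup X] [Module A X]
    [IsArtinian A X] [Nontrivial X] :
    ∃ (S : Type v) (_ : AddCommGroup S) (_ : Module A S),
      IsSimpleModule A S ∧ IsCompFactor A X S := by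
  obtain ⟨W, hW⟩ := IsAtomic.exists_atom (α := Submodule A X)
  exact ⟨W, _, _, isSimpleModule_iff_isAtom.mpr hW, W, ⊥, ⟨Submodule.quotEquivOfEqBot ⊥ rfl⟩⟩

theorem range_single_le_of_forall_exists_apply_eq {ι : Type*} [Finite ι] [DecidableEq ι]
    {M : ι → Type v} [∀ i, AddCommGroup (M i)] [∀ i, Module A (M i)]
    (N : Submodule A (Π i, M i)) (i : ι) [IsArtinian A (M i)]
    (hsurj : ∀ m : M i, ∃ x ∈ N, x i = m)
    (hdisj : ∀ j ≠ i, ∀ (S : Type v) [AddCommGroup S] [Module A S],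
      IsSimpleModule A S → IsCompFactor A (M i) S → ¬IsCompFactor A (M j) S) :
    LinearMap.range (LinearMap.single A M i) ≤ N := by
  rw [LinearMap.range_le_iff_comap]
  by_contra hK
  set K := N.comap (LinearMap.single A M i)
  have : Nontrivial (M i ⧸ K) := Submodule.Quotient.nontrivial_iff.mpr hK
  obtain ⟨S, _, _, hS, hSK⟩ := exists_isSimpleModule_isCompFactor (A := A) (M i ⧸ K)
  let f : N →ₗ[A] M i ⧸ K := K.mkQ ∘ₗ LinearMap.proj i ∘ₗ N.subtype
  have hf : Function.Surjective f := by
    intro y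
    obtain ⟨m, rfl⟩ := K.mkQ_surjective y
    obtain ⟨x, hx, rfl⟩ := hsurj m
    exact ⟨⟨x, hx⟩, rfl⟩
  let g : N →ₗ[A] Π j : {j // j ≠ i}, M j :=
    LinearMap.pi (fun j => LinearMap.proj j.1) ∘ₗ N.subtype
  have hker : LinearMap.ker g ≤ LinearMap.ker f := by
    rintro ⟨x, hx⟩ hgx
    have hx_single : Pi.single i (x i) = x := by
      funext j
      by_cases hj : j = i
      · subst hj; simp
      · simpa [hj, g] using (congrFun hgx ⟨j, hj⟩).symm
    simpa [f, K, Submodule.Quotient.mk_eq_zero, hx_single] using hx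
  obtain ⟨j, hj⟩ := (hSK.of_ker_le f hf g hker).exists_of_pi hS
  exact hdisj j j.2 S hS (hSK.of_surjective K.mkQ K.mkQ_surjective) hj

end

/-- If `M₁, ..., Mₙ` are finite-length modules with pairwise no common simple
composition factor, and `N ⊆ M₁ ⊕ ... ⊕ Mₙ` surjects onto every factor, then
`N` is the whole direct sum. -/
theorem stmt9 {A : Type} [Ring A] (n : ℕ) (M : Fin n → Type)
    [∀ i, AddCommGroup (M i)] [∀ i, Module A (M i)]
    (hlen : ∀ i, IsFiniteLength A (M i))
    (hdisj : ∀ i j, i ≠ j → ∀ (S : Type) [AddCommGroup S] [Module A S],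
      IsSimpleModule A S → ¬(IsCompFactor A (M i) S ∧ IsCompFactor A (M j) S))
    (N : Submodule A (Π i, M i))
    (hsurj : ∀ (i : Fin n) (m : M i), ∃ x ∈ N, x i = m) :
    N = ⊤ := by
  rw [eq_top_iff, ← LinearMap.iSup_range_single]
  refine iSup_le fun i => ?_
  have : IsArtinian A (M i) := (isFiniteLength_iff_isNoetherian_isArtinian.mp (hlen i)).2
  exact range_single_le_of_forall_exists_apply_eq N i (hsurj i)
    fun j hji S _ _ hS hi hj => hdisj i j hji.symm S hS ⟨hi, hj⟩
end

section
/- Hypergeometric contiguity identity: let a, b, c ∈ ℂ with c not a non-positive integer, and let F = ∑_{m≥0} ((a)_m (b)_m / ((c)_m m!)) z^m ∈ ℂ[[z]] be the formal Gauss hypergeometric series, where (x)_m denotes the rising factorial. For every integer k ≥ 0, define the differential operator Q_k = z(z−1)(d/dz)² + [(a+b−2k−1)z − c + 2k + 2](d/dz) + (k² + (2−a−b)k + (a−1)(b−1)) acting on ℂ[[z]]. Then Q_k(z^{k+1} F) = (k+1)(k+2−c) · z^k F as formal power series. -/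
open PowerSeries

/-!
The Pochhammer quotients satisfy `(m + 1)(m + c) fₘ₊₁ = (m + a)(m + b) fₘ`, which says exactly
that `F` is annihilated by the hypergeometric operator
`H = z(z - 1)∂² + ((a + b + 1)z - c)∂ + ab`. On the other hand the Leibniz rule gives, for every
power series `f`, `Qₖ(z^{k+1} f) = (k + 1)(k + 2 - c) zᵏ f + z^{k+1} H f`.
-/

section HypergeometricOperator

variable {R : Type*} [CommRing R]

set_option linter.deprecated false in
theorem derivativeFun_eq_derivative (f : R⟦X⟧) : derivativeFun f = d⁄dX R f := rfl

theorem coeff_X_mul_derivative (f : R⟦X⟧) (n : ℕ) :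
    coeff n (X * d⁄dX R f) = n * coeff n f := by
  cases n with
  | zero => simp
  | succ n => rw [coeff_succ_X_mul, coeff_derivative]; push_cast; ring

theorem X_mul_derivative_X_pow (n : ℕ) : X * d⁄dX R (X ^ n) = (n : R⟦X⟧) * X ^ n := by
  cases n with
  | zero => simp
  | succ n => rw [derivative_pow, derivative_X]; push_cast; ring

noncomputable def hypergeometricOp (a b c : R) (f : R⟦X⟧) : R⟦X⟧ :=
  X * (X - 1) * d⁄dX R (d⁄dX R f) + (C (a + b + 1) * X - C c) * d⁄dX R f + C (a * b) * f

theorem coeff_hypergeometricOp (a b c : R) (f : R⟦X⟧) (n : ℕ) :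
    coeff n (hypergeometricOp a b c f) =
      (n + a) * (n + b) * coeff n f - (n + 1) * (n + c) * coeff (n + 1) f := by
  -- `X² f'' = θ²f - θf` for the Euler operator `θ = X d⁄dX`, which scales `coeff n` by `n`
  have hθ : X * (X - 1) * d⁄dX R (d⁄dX R f) =
      X * d⁄dX R (X * d⁄dX R f) - X * d⁄dX R f - X * d⁄dX R (d⁄dX R f) := by
    rw [Derivation.leibniz, derivative_X]; simp only [smul_eq_mul]; ring
  rw [hypergeometricOp, hθ]
  simp only [LinearMap.map_add, LinearMap.map_sub, sub_mul, mul_assoc, coeff_C_mul,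
    coeff_X_mul_derivative, coeff_derivative]
  ring

theorem hypergeometricOp_eq_zero_of_coeff_succ {a b c : R} {f : R⟦X⟧}
    (hf : ∀ n : ℕ, (n + 1) * (n + c) * coeff (n + 1) f = (n + a) * (n + b) * coeff n f) :
    hypergeometricOp a b c f = 0 := by
  ext n
  rw [coeff_hypergeometricOp, hf, sub_self, map_zero]

noncomputable def contiguousOp (a b c : R) (k : ℕ) (f : R⟦X⟧) : R⟦X⟧ :=
  X * (X - 1) * d⁄dX R (d⁄dX R f) +
    (C (a + b - 2 * (k : R) - 1) * X - C c + C (2 * (k : R) + 2)) * d⁄dX R f +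
    C ((k : R) ^ 2 + (2 - a - b) * (k : R) + (a - 1) * (b - 1)) * f

theorem contiguousOp_X_pow_succ_mul (a b c : R) (k : ℕ) (f : R⟦X⟧) :
    contiguousOp a b c k (X ^ (k + 1) * f) =
      C (((k : R) + 1) * ((k : R) + 2 - c)) * X ^ k * f +
        X ^ (k + 1) * hypergeometricOp a b c f := by
  have hD1 : d⁄dX R (X ^ (k + 1) * f) = X ^ k * (((k : R⟦X⟧) + 1) * f + X * d⁄dX R f) := by
    rw [Derivation.leibniz, derivative_pow, derivative_X, smul_eq_mul, smul_eq_mul,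
      Nat.add_sub_cancel]
    push_cast; ring
  have hD2 : (X : R⟦X⟧) * d⁄dX R (d⁄dX R (X ^ (k + 1) * f)) =
      X ^ k * ((k : R⟦X⟧) * ((k : R⟦X⟧) + 1) * f + 2 * ((k : R⟦X⟧) + 1) * X * d⁄dX R f +
        X ^ 2 * d⁄dX R (d⁄dX R f)) := by
    simp only [hD1, Derivation.leibniz, smul_eq_mul, map_add, derivative_X,
      Derivation.map_natCast, Derivation.map_one_eq_zero]
    linear_combination (((k : R⟦X⟧) + 1) * f + X * d⁄dX R f) * X_mul_derivative_X_pow (R := R) k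
  simp only [contiguousOp, hypergeometricOp, map_add, map_sub, map_mul, map_natCast, map_ofNat,
    map_one, map_pow]
  linear_combination (X - 1) * hD2 + (C a * X + C b * X - 2 * k * X - X - C c + 2 * k + 2) * hD1

end HypergeometricOperator

section HypergeometricSeries

variable {K : Type*} [Field K] [CharZero K]

noncomputable def hypergeometricSeries (a b c : K) : K⟦X⟧ :=
  mk fun m => (ascPochhammer K m).eval a * (ascPochhammer K m).eval b /
    ((ascPochhammer K m).eval c * (m.factorial : K))

theorem coeff_succ_hypergeometricSeries {a b c : K} (hc : ∀ m : ℕ, c ≠ -(m : K)) (n : ℕ) :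
    (n + 1) * (n + c) * coeff (n + 1) (hypergeometricSeries a b c) =
      (n + a) * (n + b) * coeff n (hypergeometricSeries a b c) := by
  have hpoch : (ascPochhammer K n).eval c ≠ 0 := by
    rw [ne_eq, ascPochhammer_eval_eq_zero_iff]
    rintro ⟨m, -, hm⟩
    exact hc m (by rw [hm, neg_neg])
  have hcn : c + n ≠ 0 := fun h => hc n (eq_neg_of_add_eq_zero_left h)
  have hfact : (n.factorial : K) ≠ 0 := Nat.cast_ne_zero.mpr n.factorial_ne_zero
  have hsucc : (n : K) + 1 ≠ 0 := Nat.cast_add_one_ne_zero n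
  simp only [hypergeometricSeries, coeff_mk, ascPochhammer_succ_eval, Nat.factorial_succ,
    Nat.cast_mul, Nat.cast_succ]
  field_simp
  ring

theorem hypergeometricOp_hypergeometricSeries {a b c : K} (hc : ∀ m : ℕ, c ≠ -(m : K)) :
    hypergeometricOp a b c (hypergeometricSeries a b c) = 0 :=
  hypergeometricOp_eq_zero_of_coeff_succ (coeff_succ_hypergeometricSeries hc)

end HypergeometricSeries

/-- Hypergeometric contiguity identity: with `F = ∑ (a)ₘ(b)ₘ/((c)ₘ m!) zᵐ` the formal
Gauss hypergeometric series and `Qₖ` the displayed second-order operator, one has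
`Qₖ(z^{k+1} F) = (k+1)(k+2−c) zᵏ F` for every `k ≥ 0`. -/
theorem stmt13 (a b c : ℂ) (hc : ∀ m : ℕ, c ≠ -(m : ℂ))
    (F : ℂ⟦X⟧)
    (hF : F = PowerSeries.mk fun m =>
      (ascPochhammer ℂ m).eval a * (ascPochhammer ℂ m).eval b /
        ((ascPochhammer ℂ m).eval c * (m.factorial : ℂ)))
    (k : ℕ) :
    PowerSeries.X * (PowerSeries.X - 1) *
        derivativeFun (derivativeFun (PowerSeries.X ^ (k + 1) * F)) +
      (PowerSeries.C (a + b - 2 * (k : ℂ) - 1) * PowerSeries.X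
          - PowerSeries.C c + PowerSeries.C (2 * (k : ℂ) + 2)) *
        derivativeFun (PowerSeries.X ^ (k + 1) * F) +
      PowerSeries.C ((k : ℂ) ^ 2 + (2 - a - b) * (k : ℂ) + (a - 1) * (b - 1)) *
        (PowerSeries.X ^ (k + 1) * F) =
    PowerSeries.C (((k : ℂ) + 1) * ((k : ℂ) + 2 - c)) * PowerSeries.X ^ k * F := by
  rw [← hypergeometricSeries] at hF
  subst hF
  have h := contiguousOp_X_pow_succ_mul a b c k (hypergeometricSeries a b c)
  rw [contiguousOp, hypergeometricOp_hypergeometricSeries hc, mul_zero, add_zero] at h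
  simpa only [derivativeFun_eq_derivative] using h
end
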